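/- arXiv:1202.4816 — 2 statements merged into one kernel-verified Lean document; each statement's English description precedes it below -/
import Mathlib

section
/- If q̄ = {p, q, r} is a Farey triple, then for every element p of q̄ the mutation μ_p(q̄) is again a Farey triple. -/
/-- `ℚ∞ = ℚ ∪ {∞}`, ordered with `∞ = ⊤` as the greatest element. -/
abbrev QInf : Type := WithTop ℚ

/-- The numerator `d(q)` of the reduced representation `q = d(q)/r(q)`; `d(∞) = 1`. -/
def fnum : QInf → ℤ := WithTop.recTopCoe 1 (fun q => q.num)

/-- The denominator `r(q)` of the reduced representation `q = d(q)/r(q)`; `r(∞) = 0`. -/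
def fden : QInf → ℤ := WithTop.recTopCoe 0 (fun q => (q.den : ℤ))

/-- The element of `ℚ∞` represented by the fraction `a / b`: it is `∞` if `b = 0`,
and otherwise the rational number `a / b` (normalized so that the denominator is
positive and the fraction is in lowest terms). -/
def fmk (a b : ℤ) : QInf := if b = 0 then (⊤ : QInf) else (((a : ℚ) / (b : ℚ)) : ℚ)

/-- The Farey distance `Δ(p,q) = |d(p)r(q) - d(q)r(p)|`. -/
def fdist (p q : QInf) : ℤ := |fnum p * fden q - fnum q * fden p|

/-- `p` and `q` are Farey neighbours if `Δ(p,q) = 1`. -/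
def FareyNbr (p q : QInf) : Prop := fdist p q = 1

/-- The Farey sum `p ⊕ q = (d(p) + d(q)) / (r(p) + r(q))`. -/
def fsum (p q : QInf) : QInf := fmk (fnum p + fnum q) (fden p + fden q)

/-- The Farey difference `p ⊖ q = (d(p) - d(q)) / (r(p) - r(q))`. -/
def fdiff (p q : QInf) : QInf := fmk (fnum p - fnum q) (fden p - fden q)

/-- A Farey triple: a three-element subset of `ℚ∞` whose elements are pairwise
Farey neighbours. -/
def IsFareyTriple (s : Set QInf) : Prop := s.ncard = 3 ∧ s.Pairwise FareyNbr

/-- The element replacing `p` in the mutation of the Farey triple `{p, q, r}` in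
direction `p`: it is `q ⊖ r` if `p` lies strictly between `q` and `r`, and `q ⊕ r`
otherwise. -/
def fareyMutEl (p q r : QInf) : QInf :=
  if (q < p ∧ p < r) ∨ (r < p ∧ p < q) then fdiff q r else fsum q r

/-- The mutation of the Farey triple `{p, q, r}` in direction `p`. -/
def fareyMut (p q r : QInf) : Set QInf := {fareyMutEl p q r, q, r}

/-- The complexity `c(q) = |d(q)| + r(q) + |d(q) - r(q)|`. -/
def complexity (x : QInf) : ℤ := |fnum x| + fden x + |fnum x - fden x|

/-! Write `u = d(q) r(r) − d(r) r(q) = ±1` for Farey neighbours `q, r`. For `s = ±1` the vector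
`(d(q) + s d(r), r(q) + s r(r))` has determinant `±u` with `(d(q), r(q))` and `u` with
`(d(r), r(r))`, hence it is primitive and `q ⊕ r`, `q ⊖ r` are neighbours of both `q` and `r`. -/

lemma fmk_of_pos {a b : ℤ} (hb : 0 < b) (h : IsCoprime a b) :
    fnum (fmk a b) = a ∧ fden (fmk a b) = b := by
  have hab := Int.isCoprime_iff_gcd_eq_one.mp h
  rw [fmk, if_neg hb.ne']
  exact ⟨Rat.num_div_eq_of_coprime hb hab, Rat.den_div_eq_of_coprime hb hab⟩

lemma fmk_neg_neg (a b : ℤ) : fmk (-a) (-b) = fmk a b := by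
  by_cases hb : b = 0
  · simp [fmk, hb]
  · simp only [fmk, if_neg hb, neg_eq_zero, Int.cast_neg, neg_div_neg_eq]

lemma fmk_eq_or_eq_neg {a b : ℤ} (h : IsCoprime a b) :
    (fnum (fmk a b) = a ∧ fden (fmk a b) = b) ∨
      (fnum (fmk a b) = -a ∧ fden (fmk a b) = -b) := by
  rcases lt_trichotomy b 0 with hb | rfl | hb
  · right
    rw [← fmk_neg_neg a b]
    exact fmk_of_pos (neg_pos.mpr hb) h.neg_neg
  · have hfmk : fmk a 0 = ⊤ := if_pos rfl
    rcases Int.isUnit_iff.mp (isCoprime_zero_right.mp h) with rfl | rfl <;> rw [hfmk]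
    · exact Or.inl ⟨rfl, rfl⟩
    · exact Or.inr ⟨rfl, rfl⟩
  · exact Or.inl (fmk_of_pos hb h)

lemma fdist_fmk {a b : ℤ} (h : IsCoprime a b) (x : QInf) :
    fdist (fmk a b) x = |a * fden x - fnum x * b| := by
  rcases fmk_eq_or_eq_neg h with ⟨hn, hd⟩ | ⟨hn, hd⟩ <;> rw [fdist, hn, hd]
  rw [← abs_neg]
  ring_nf

lemma fdist_comm (x y : QInf) : fdist x y = fdist y x := by
  rw [fdist, fdist, abs_sub_comm]

namespace FareyNbr

variable {q r : QInf}

lemma symm (h : FareyNbr q r) : FareyNbr r q := by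
  rwa [FareyNbr, fdist_comm]

instance : Std.Symm FareyNbr := ⟨fun _ _ => symm⟩

lemma ne (h : FareyNbr q r) : q ≠ r := by
  rintro rfl
  simp [FareyNbr, fdist] at h

lemma det_eq_one_or_neg_one (h : FareyNbr q r) :
    fnum q * fden r - fnum r * fden q = 1 ∨ fnum q * fden r - fnum r * fden q = -1 :=
  abs_eq zero_le_one |>.mp h

variable {s : ℤ}

lemma isCoprime_add_mul (h : FareyNbr q r) :
    IsCoprime (fnum q + s * fnum r) (fden q + s * fden r) := by
  rcases h.det_eq_one_or_neg_one with hu | hu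
  · exact ⟨fden r, -fnum r, by linear_combination hu⟩
  · exact ⟨-fden r, fnum r, by linear_combination -hu⟩

lemma fdist_fmk_add_mul_left (h : FareyNbr q r) :
    fdist (fmk (fnum q + s * fnum r) (fden q + s * fden r)) q = |s| := by
  rw [fdist_fmk h.isCoprime_add_mul, ← abs_neg, ← mul_one |s|, ← h, fdist, ← abs_mul]
  ring_nf

lemma fdist_fmk_add_mul_right (h : FareyNbr q r) :
    fdist (fmk (fnum q + s * fnum r) (fden q + s * fden r)) r = 1 := by
  rw [fdist_fmk h.isCoprime_add_mul, ← h, fdist]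
  ring_nf

lemma fsum_left (h : FareyNbr q r) : FareyNbr (fsum q r) q := by
  simpa [FareyNbr, fsum] using h.fdist_fmk_add_mul_left (s := 1)

lemma fsum_right (h : FareyNbr q r) : FareyNbr (fsum q r) r := by
  simpa [FareyNbr, fsum] using h.fdist_fmk_add_mul_right (s := 1)

lemma fdiff_left (h : FareyNbr q r) : FareyNbr (fdiff q r) q := by
  simpa [FareyNbr, fdiff, ← sub_eq_add_neg] using h.fdist_fmk_add_mul_left (s := -1)

lemma fdiff_right (h : FareyNbr q r) : FareyNbr (fdiff q r) r := by
  simpa [FareyNbr, fdiff, ← sub_eq_add_neg] using h.fdist_fmk_add_mul_right (s := -1)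

lemma fareyMutEl_left (p : QInf) (h : FareyNbr q r) : FareyNbr (fareyMutEl p q r) q := by
  unfold fareyMutEl
  split_ifs
  exacts [h.fdiff_left, h.fsum_left]

lemma fareyMutEl_right (p : QInf) (h : FareyNbr q r) : FareyNbr (fareyMutEl p q r) r := by
  unfold fareyMutEl
  split_ifs
  exacts [h.fdiff_right, h.fsum_right]

end FareyNbr

lemma isFareyTriple_of_fareyNbr {x y z : QInf}
    (hxy : FareyNbr x y) (hxz : FareyNbr x z) (hyz : FareyNbr y z) :
    IsFareyTriple {x, y, z} := by
  refine ⟨Set.ncard_eq_three.mpr ⟨x, y, z, hxy.ne, hxz.ne, hyz.ne, rfl⟩, ?_⟩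
  rw [Set.pairwise_insert_of_symm, Set.pairwise_pair_of_symm]
  refine ⟨fun _ => hyz, ?_⟩
  rintro w (rfl | rfl) -
  exacts [hxy, hxz]

theorem fareyMut_isFareyTriple_general (p q r : QInf)
    (h3 : FareyNbr q r) :
    IsFareyTriple (fareyMut p q r) :=
  isFareyTriple_of_fareyNbr (h3.fareyMutEl_left p) (h3.fareyMutEl_right p) h3

/-- If `{p, q, r}` is a Farey triple, then its mutation in direction `p` is again a
Farey triple.  (By symmetry of the hypotheses in `p`, `q`, `r`, this covers the
mutation in any of the three directions.) -/
theorem fareyMut_isFareyTriple (p q r : QInf)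
    (hpq : p ≠ q) (hpr : p ≠ r) (hqr : q ≠ r)
    (h1 : FareyNbr p q) (h2 : FareyNbr p r) (h3 : FareyNbr q r) :
    IsFareyTriple (fareyMut p q r) :=
  fareyMut_isFareyTriple_general p q r h3
end

section
/- Mutation of Farey triples is involutive: if q̄ = {p, q, r} is a Farey triple and μ_p(q̄) = {p', q, r}, then μ_{p'}(μ_p(q̄)) = q̄. -/
def fdet (p q : QInf) : ℤ := fnum p * fden q - fnum q * fden p

@[simp] lemma fnum_coe (q : ℚ) : fnum (q : QInf) = q.num := rfl
@[simp] lemma fden_coe (q : ℚ) : fden (q : QInf) = (q.den : ℤ) := rfl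
@[simp] lemma fnum_top : fnum (⊤ : QInf) = 1 := rfl
@[simp] lemma fden_top : fden (⊤ : QInf) = 0 := rfl

lemma fden_nonneg (x : QInf) : 0 ≤ fden x := by
  cases x using WithTop.recTopCoe <;> simp

lemma fareyNbr_iff_abs_fdet {p q : QInf} : FareyNbr p q ↔ |fdet p q| = 1 := Iff.rfl

lemma fdet_mul_fnum (p q r : QInf) :
    fdet q r * fnum p = fdet p r * fnum q - fdet p q * fnum r := by
  unfold fdet; ring

lemma fdet_mul_fden (p q r : QInf) :
    fdet q r * fden p = fdet p r * fden q - fdet p q * fden r := by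
  unfold fdet; ring

lemma fmk_fnum_fden (x : QInf) : fmk (fnum x) (fden x) = x := by
  cases x using WithTop.recTopCoe with
  | top => simp [fmk]
  | coe q =>
    rw [fnum_coe, fden_coe, fmk, if_neg (by exact_mod_cast q.den_nz)]
    exact congrArg _ (by exact_mod_cast Rat.num_div_den q)

lemma fmk_mul_left {u : ℤ} (hu : |u| = 1) (a b : ℤ) : fmk (u * a) (u * b) = fmk a b := by
  rcases abs_eq zero_le_one |>.mp hu with rfl | rfl
  · simp
  · unfold fmk
    by_cases hb : b = 0
    · simp [hb]
    · simp only [neg_mul, one_mul, neg_eq_zero, hb, if_false, Int.cast_neg, neg_div_neg_eq]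

lemma fdiff_comm (p q : QInf) : fdiff q p = fdiff p q := by
  rw [fdiff, fdiff, ← fmk_mul_left (u := -1) (by simp)]
  congr 1 <;> ring

lemma lt_fmk_iff {a b : ℤ} (hb : 0 < b) (x : QInf) :
    x < fmk a b ↔ fnum x * b < a * fden x := by
  rw [fmk, if_neg hb.ne']
  cases x using WithTop.recTopCoe with
  | top => simp [hb.not_gt]
  | coe c =>
    have hc : (0 : ℚ) < c.den := by exact_mod_cast c.pos
    rw [WithTop.coe_lt_coe, fnum_coe, fden_coe, ← Rat.num_div_den c,
      div_lt_div_iff₀ hc (by exact_mod_cast hb), Rat.num_div_den c]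
    exact_mod_cast Iff.rfl

lemma fmk_lt_iff {a b : ℤ} (hb : 0 < b) (x : QInf) :
    fmk a b < x ↔ a * fden x < fnum x * b := by
  rw [fmk, if_neg hb.ne']
  cases x using WithTop.recTopCoe with
  | top => simp [hb]
  | coe c =>
    have hc : (0 : ℚ) < c.den := by exact_mod_cast c.pos
    rw [WithTop.coe_lt_coe, fnum_coe, fden_coe, ← Rat.num_div_den c,
      div_lt_div_iff₀ (by exact_mod_cast hb) hc, Rat.num_div_den c]
    exact_mod_cast Iff.rfl

lemma eq_fsum_or_eq_fdiff {p q r : QInf}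
    (hpq : FareyNbr p q) (hpr : FareyNbr p r) (hqr : FareyNbr q r) :
    p = fsum q r ∨ p = fdiff q r := by
  rw [fareyNbr_iff_abs_fdet] at hpq hpr hqr
  set a := fdet p q
  set b := fdet p r
  have hb : b * b = 1 := by rw [← abs_mul_abs_self, hpr, one_mul]
  have hc : fdet q r * fdet q r = 1 := by rw [← abs_mul_abs_self, hqr, one_mul]
  -- scale `fdet_mul_fnum`, `fdet_mul_fden` by the units `fdet q r` and `b`
  have key : p = fmk (fnum q - a * b * fnum r) (fden q - a * b * fden r) := by
    rw [← fmk_mul_left hpr, ← fmk_mul_left hqr, ← fmk_fnum_fden p]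
    congr 1
    · linear_combination
        (-fnum p) * hc + fdet q r * fdet_mul_fnum p q r + fdet q r * a * fnum r * hb
    · linear_combination
        (-fden p) * hc + fdet q r * fdet_mul_fden p q r + fdet q r * a * fden r * hb
  have hab : |a * b| = 1 := by rw [abs_mul, hpq, hpr, one_mul]
  rcases abs_eq zero_le_one |>.mp hab with h | h
  · right
    rw [key, h, fdiff, one_mul, one_mul]
  · left
    rw [key, h, fsum, neg_one_mul, neg_one_mul, sub_neg_eq_add, sub_neg_eq_add]

lemma fsum_strictly_between {q r : QInf} (h : FareyNbr q r) :
    (q < fsum q r ∧ fsum q r < r) ∨ (r < fsum q r ∧ fsum q r < q) := by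
  rw [fareyNbr_iff_abs_fdet, fdet] at h
  have hpos : 0 < fden q + fden r := by
    rcases (fden_nonneg q).lt_or_eq with hq | hq
    · linarith [fden_nonneg r]
    rcases (fden_nonneg r).lt_or_eq with hr | hr
    · linarith
    simp [← hq, ← hr] at h
  rw [fsum, lt_fmk_iff hpos, fmk_lt_iff hpos, lt_fmk_iff hpos, fmk_lt_iff hpos]
  rcases abs_eq zero_le_one |>.mp h with h | h
  · right; constructor <;> linarith
  · left; constructor <;> linarith

lemma fdiff_not_strictly_between (q r : QInf) :
    ¬ ((q < fdiff q r ∧ fdiff q r < r) ∨ (r < fdiff q r ∧ fdiff q r < q)) := by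
  wlog hqr : fden r ≤ fden q generalizing q r
  · rw [fdiff_comm, or_comm]
    exact this r q (by linarith)
  rcases hqr.lt_or_eq with hlt | heq
  · have hpos : 0 < fden q - fden r := by linarith
    rw [fdiff, lt_fmk_iff hpos, fmk_lt_iff hpos, lt_fmk_iff hpos, fmk_lt_iff hpos]
    rintro (⟨h, h'⟩ | ⟨h, h'⟩) <;> linarith
  · rw [fdiff, fmk, if_pos (by linarith)]
    rintro (⟨-, h⟩ | ⟨-, h⟩) <;> exact not_top_lt h

lemma fareyMutEl_fsum {q r : QInf} (h : FareyNbr q r) :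
    fareyMutEl (fsum q r) q r = fdiff q r :=
  if_pos (fsum_strictly_between h)

lemma fareyMutEl_fdiff (q r : QInf) : fareyMutEl (fdiff q r) q r = fsum q r :=
  if_neg (fdiff_not_strictly_between q r)

theorem fareyMut_involutive_general (p q r : QInf)
    (h1 : FareyNbr p q) (h2 : FareyNbr p r) (h3 : FareyNbr q r) :
    fareyMut (fareyMutEl p q r) q r = ({p, q, r} : Set QInf) := by
  rcases eq_fsum_or_eq_fdiff h1 h2 h3 with rfl | rfl
  · rw [fareyMut, fareyMutEl_fsum h3, fareyMutEl_fdiff]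
  · rw [fareyMut, fareyMutEl_fdiff, fareyMutEl_fsum h3]

/-- Mutation of Farey triples is involutive: if `{p, q, r}` is a Farey triple and
`μ_p({p, q, r}) = {p', q, r}` with `p' = fareyMutEl p q r`, then mutating
`{p', q, r}` in direction `p'` gives back `{p, q, r}`. -/
theorem fareyMut_involutive (p q r : QInf)
    (hpq : p ≠ q) (hpr : p ≠ r) (hqr : q ≠ r)
    (h1 : FareyNbr p q) (h2 : FareyNbr p r) (h3 : FareyNbr q r) :
    fareyMut (fareyMutEl p q r) q r = ({p, q, r} : Set QInf) :=
  fareyMut_involutive_general p q r h1 h2 h3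
end
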